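/- Let X be a countable uniformly discrete metric space admitting a uniform embedding into a countable discrete group G equipped with a proper left-invariant metric. Then there exist R > 0 and a subset Y ⊆ X such that every point of X lies within distance R of Y (so the inclusion Y ⊆ X is a coarse equivalence) and Y admits a free, globally controlled atlas. -/

import Mathlib

open Metric

def UniformlyDiscrete (X : Type*) [MetricSpace X] : Prop :=
  ∃ δ > (0:ℝ), ∀ x y : X, x ≠ y → δ ≤ dist x y

def IsUniformEmbeddingMap {X Y : Type*} [MetricSpace X] [MetricSpace Y]
    (f : X → Y) : Prop :=
  (∀ R > (0:ℝ), ∃ S > (0:ℝ), ∀ x y : X, dist x y ≤ R → dist (f x) (f y) ≤ S) ∧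
  (∀ R > (0:ℝ), ∃ S > (0:ℝ), ∀ x y : X, dist (f x) (f y) ≤ R → dist x y ≤ S)

/-- A partial bijection of `X`: a subset of `X × X` both of whose coordinate
projections are injective. -/
def IsPartialBijection {X : Type*} (t : Set (X × X)) : Prop :=
  ∀ p ∈ t, ∀ q ∈ t, (p.1 = q.1 → p = q) ∧ (p.2 = q.2 → p = q)

/-- A partial translation of `X`: a partial bijection moving points a uniformly
bounded distance. -/
def IsPartialTranslation {X : Type*} [MetricSpace X] (t : Set (X × X)) : Prop :=
  IsPartialBijection t ∧ ∃ B : ℝ, ∀ p ∈ t, dist p.1 p.2 ≤ B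

/-- `σ` is a partial cotranslation for the family `T` of partial translations:
`σ` is a partial bijection, and whenever `(x,y) ∈ t ∈ T` and `σ` is defined at
both `x` and `y`, then `(σ x, σ y) ∈ t`.  Here `(x, x') ∈ σ` means `σ x = x'`. -/
def IsPartialCotranslationFor {X : Type*} [MetricSpace X]
    (T : Set (Set (X × X))) (σ : Set (X × X)) : Prop :=
  IsPartialBijection σ ∧
    ∀ t ∈ T, ∀ x y x' y' : X, (x, y) ∈ t → (x, x') ∈ σ → (y, y') ∈ σ → (x', y') ∈ t

/-- `(T, Sig)` is an atlas chart at scale `R` with multiplicity bound `k`: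
`T` is a finite set of pairwise disjoint partial translations whose union
contains the `R`-neighbourhood of the diagonal, `Sig` is a set of partial
cotranslations for `T`, at most `k` elements of `Sig` send `x` to `x'` for any
`x, x'`, and the elements of `Sig` act transitively on each `t ∈ T`. -/
def IsAtlasAt {X : Type*} [MetricSpace X] (R : ℝ) (k : ℕ)
    (T : Set (Set (X × X))) (Sig : Set (Set (X × X))) : Prop :=
  T.Finite ∧
  (∀ t ∈ T, IsPartialTranslation t) ∧
  T.Pairwise Disjoint ∧
  (∀ x y : X, dist x y < R → ∃ t ∈ T, (x, y) ∈ t) ∧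
  (∀ σ ∈ Sig, IsPartialCotranslationFor T σ) ∧
  (∀ x x' : X, {σ ∈ Sig | (x, x') ∈ σ}.Finite ∧ {σ ∈ Sig | (x, x') ∈ σ}.ncard ≤ k) ∧
  (∀ t ∈ T, ∀ x y x' y' : X, (x, y) ∈ t → (x', y') ∈ t →
    ∃ σ ∈ Sig, (x, x') ∈ σ ∧ (y, y') ∈ σ)

/-- The cotranslation orbit of the pair `(x, y)` under `Sig`. -/
def cotranslationOrbit {X : Type*} (Sig : Set (Set (X × X))) (x y : X) :
    Set (X × X) :=
  {p : X × X | ∃ σ ∈ Sig, (x, p.1) ∈ σ ∧ (y, p.2) ∈ σ}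

/-- An atlas chart is globally controlled if every cotranslation orbit is a
partial translation. -/
def IsGloballyControlledAt {X : Type*} [MetricSpace X]
    (Sig : Set (Set (X × X))) : Prop :=
  ∀ x y : X, IsPartialTranslation (cotranslationOrbit Sig x y)

/-!
Pick a set `Y` of representatives of the fibres of `ψ`, so that `ψ` is injective on `Y` and every
point of `X` lies in the same fibre as, hence at bounded distance from, a point of `Y`. Transport
the group structure along `ψ`: the right multiplications by the finitely many `g` in a ball around
`1` pull back to pairwise disjoint partial translations covering the `R`-neighbourhood of the
diagonal, and all left multiplications pull back to cotranslations for them, since left and right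
multiplications commute. A left multiplication is determined by the image of a single point, which
makes the atlas free, and the orbit of `(x, y)` lies inside the pulled back right multiplication by
`(ψ x)⁻¹ * ψ y`, which makes it globally controlled.
-/

open Function

variable {X Y G : Type*}

lemma IsUniformEmbeddingMap.domRestrict [MetricSpace X] [MetricSpace Y] {f : X → Y}
    (hf : IsUniformEmbeddingMap f) (s : Set X) :
    IsUniformEmbeddingMap (s.domRestrict f) := by
  refine ⟨fun R hR => ?_, fun R hR => ?_⟩
  · obtain ⟨S, hS, h⟩ := hf.1 R hR
    exact ⟨S, hS, fun a b hab => h a b hab⟩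
  · obtain ⟨S, hS, h⟩ := hf.2 R hR
    exact ⟨S, hS, fun a b hab => h a b hab⟩

lemma IsUniformEmbeddingMap.exists_dist_le_of_dist_le [MetricSpace X] [MetricSpace Y]
    {f : X → Y} (hf : IsUniformEmbeddingMap f) (C : ℝ) :
    ∃ S, ∀ x y, dist (f x) (f y) ≤ C → dist x y ≤ S := by
  obtain ⟨S, -, hS⟩ := hf.2 (max C 1) (by positivity)
  exact ⟨S, fun x y h => hS x y (h.trans (le_max_left _ _))⟩

lemma IsPartialTranslation.mono [MetricSpace X] {s t : Set (X × X)}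
    (ht : IsPartialTranslation t) (hst : s ⊆ t) :
    IsPartialTranslation s :=
  ⟨fun p hp q hq => ht.1 p (hst hp) q (hst hq), ht.2.imp fun _ hB p hp => hB p (hst hp)⟩

def pullbackGraph {Y G : Type*} (φ : Y → G) (f : G → G) : Set (Y × Y) :=
  {p | φ p.2 = f (φ p.1)}

section Pullback

variable {φ : Y → G}

lemma isPartialBijection_pullbackGraph (hφ : Injective φ) {f : G → G} (hf : Injective f) :
    IsPartialBijection (pullbackGraph φ f) := by
  intro p hp q hq
  refine ⟨fun h1 => Prod.ext h1 (hφ ?_), fun h2 => Prod.ext (hφ (hf ?_)) h2⟩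
  · rw [hp, hq, h1]
  · rw [← hp, ← hq, h2]

lemma isPartialTranslation_pullbackGraph [MetricSpace Y] [MetricSpace G] (hφ : Injective φ)
    (hue : IsUniformEmbeddingMap φ) {f : G → G} (hf : Injective f) {C : ℝ}
    (hC : ∀ a, dist a (f a) ≤ C) :
    IsPartialTranslation (pullbackGraph φ f) := by
  refine ⟨isPartialBijection_pullbackGraph hφ hf, ?_⟩
  obtain ⟨S, hS⟩ := hue.exists_dist_le_of_dist_le C
  exact ⟨S, fun p hp => hS _ _ ((congrArg _ hp).trans_le (hC _))⟩

variable [Group G]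

lemma disjoint_pullbackGraph_mul_right {g g' : G} (hne : g ≠ g') :
    Disjoint (pullbackGraph φ (· * g)) (pullbackGraph φ (· * g')) :=
  Set.disjoint_left.2 fun _ hg hg' => hne (mul_left_cancel (hg.symm.trans hg'))

lemma mem_pullbackGraph_mul_right_inv_mul (x y : Y) :
    (x, y) ∈ pullbackGraph φ (· * ((φ x)⁻¹ * φ y)) :=
  (mul_inv_cancel_left _ _).symm

lemma mem_pullbackGraph_mul_left_iff {h : G} {x x' : Y} :
    (x, x') ∈ pullbackGraph φ (h * ·) ↔ h = φ x' * (φ x)⁻¹ :=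
  eq_comm.trans eq_mul_inv_iff_mul_eq.symm

lemma isPartialCotranslationFor_pullbackGraph_mul_left [MetricSpace Y] (hφ : Injective φ)
    (s : Set G) (h : G) :
    IsPartialCotranslationFor ((fun g => pullbackGraph φ (· * g)) '' s)
      (pullbackGraph φ (h * ·)) := by
  refine ⟨isPartialBijection_pullbackGraph hφ (mul_right_injective h), ?_⟩
  rintro _ ⟨g, -, rfl⟩ x y x' y' (hxy : φ y = φ x * g) (hx : φ x' = h * φ x)
    (hy : φ y' = h * φ y)
  show φ y' = φ x' * g
  rw [hy, hxy, hx, mul_assoc]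

lemma cotranslationOrbit_subset_pullbackGraph_mul_right (x y : Y) :
    cotranslationOrbit (Set.range fun h => pullbackGraph φ (h * ·)) x y ⊆
      pullbackGraph φ (· * ((φ x)⁻¹ * φ y)) := by
  rintro p ⟨_, ⟨h, rfl⟩, (hx : φ p.1 = h * φ x), (hy : φ p.2 = h * φ y)⟩
  show φ p.2 = φ p.1 * ((φ x)⁻¹ * φ y)
  rw [hx, hy, mul_assoc, mul_inv_cancel_left]

end Pullback

section LeftInvariant

variable [MetricSpace Y] [Group G] [MetricSpace G] {φ : Y → G}

lemma isPartialTranslation_pullbackGraph_mul_right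
    (hinv : ∀ g x y : G, dist (g * x) (g * y) = dist x y) (hφ : Injective φ)
    (hue : IsUniformEmbeddingMap φ) (g : G) :
    IsPartialTranslation (pullbackGraph φ (· * g)) :=
  isPartialTranslation_pullbackGraph hφ hue (mul_left_injective g) (C := dist 1 g) fun a => by
    rw [← hinv a 1 g, mul_one]

lemma isAtlasAt_pullbackGraph_mul (hinv : ∀ g x y : G, dist (g * x) (g * y) = dist x y)
    (hφ : Injective φ) (hue : IsUniformEmbeddingMap φ) {R S : ℝ}
    (hS : ∀ x y, dist x y < R → dist (φ x) (φ y) ≤ S)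
    (hball : (closedBall (1 : G) S).Finite) :
    IsAtlasAt R 1 ((fun g => pullbackGraph φ (· * g)) '' closedBall 1 S)
      (Set.range fun h => pullbackGraph φ (h * ·)) := by
  refine ⟨hball.image _, ?_, ?_, fun x y hxy => ?_, ?_, fun x x' => ?_, ?_⟩
  · rintro _ ⟨g, -, rfl⟩
    exact isPartialTranslation_pullbackGraph_mul_right hinv hφ hue g
  · rintro _ ⟨g, -, rfl⟩ _ ⟨g', -, rfl⟩ hne
    exact disjoint_pullbackGraph_mul_right fun hgg' => hne (by rw [hgg'])
  · refine ⟨_, ⟨(φ x)⁻¹ * φ y, ?_, rfl⟩, mem_pullbackGraph_mul_right_inv_mul x y⟩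
    rw [mem_closedBall, ← hinv (φ x), mul_inv_cancel_left, mul_one, dist_comm]
    exact hS x y hxy
  · rintro _ ⟨h, rfl⟩
    exact isPartialCotranslationFor_pullbackGraph_mul_left hφ _ h
  · have hsub : {σ ∈ Set.range fun h => pullbackGraph φ (h * ·) | (x, x') ∈ σ} ⊆
        {pullbackGraph φ ((φ x' * (φ x)⁻¹) * ·)} := by
      rintro _ ⟨⟨h, rfl⟩, hx⟩
      rw [Set.mem_singleton_iff, mem_pullbackGraph_mul_left_iff.1 hx]
    exact ⟨(Set.finite_singleton _).subset hsub,
      (Set.ncard_le_ncard hsub (Set.finite_singleton _)).trans (Set.ncard_singleton _).le⟩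
  · rintro _ ⟨g, -, rfl⟩ x y x' y' (hxy : φ y = φ x * g) (hxy' : φ y' = φ x' * g)
    refine ⟨_, ⟨φ x' * (φ x)⁻¹, rfl⟩, mem_pullbackGraph_mul_left_iff.2 rfl, ?_⟩
    show φ y' = φ x' * (φ x)⁻¹ * φ y
    rw [hxy', hxy, ← mul_assoc, inv_mul_cancel_right]

lemma isGloballyControlledAt_range_pullbackGraph_mul_left
    (hinv : ∀ g x y : G, dist (g * x) (g * y) = dist x y) (hφ : Injective φ)
    (hue : IsUniformEmbeddingMap φ) :
    IsGloballyControlledAt (Set.range fun h => pullbackGraph φ (h * ·)) := fun x y =>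
  (isPartialTranslation_pullbackGraph_mul_right hinv hφ hue _).mono
    (cotranslationOrbit_subset_pullbackGraph_mul_right x y)

theorem exists_free_globallyControlled_atlas_of_injective
    (hinv : ∀ g x y : G, dist (g * x) (g * y) = dist x y)
    (hproper : ∀ (x : G) (r : ℝ), (closedBall x r).Finite) (hφ : Injective φ)
    (hue : IsUniformEmbeddingMap φ) {R : ℝ} (hR : 0 < R) :
    ∃ T Sig : Set (Set (Y × Y)), IsAtlasAt R 1 T Sig ∧ IsGloballyControlledAt Sig := by
  obtain ⟨S, -, hS⟩ := hue.1 R hR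
  exact ⟨_, _,
    isAtlasAt_pullbackGraph_mul hinv hφ hue (fun x y h => hS x y h.le) (hproper 1 S),
    isGloballyControlledAt_range_pullbackGraph_mul_left hinv hφ hue⟩

end LeftInvariant

theorem stmt15_general (X : Type) [MetricSpace X]
    (G : Type) [Group G] [MetricSpace G]
    (hinv : ∀ g x y : G, dist (g * x) (g * y) = dist x y)
    (hproper : ∀ (x : G) (r : ℝ), (closedBall x r).Finite)
    (ψ : X → G) (hue : IsUniformEmbeddingMap ψ) :
    ∃ R > (0:ℝ), ∃ Y : Set X,
      (∀ x : X, ∃ y ∈ Y, dist x y ≤ R) ∧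
      ∀ R' > (0:ℝ), ∃ T Sig : Set (Set (↥Y × ↥Y)),
        IsAtlasAt R' 1 T Sig ∧ IsGloballyControlledAt Sig := by
  obtain ⟨Y, hYimage, hYinj⟩ := Set.exists_image_eq_and_injOn Set.univ ψ
  obtain ⟨S, hSpos, hS⟩ := hue.2 1 one_pos
  refine ⟨S, hSpos, Y, fun x => ?_, fun R' hR' => ?_⟩
  · obtain ⟨y, hy, hxy⟩ : ψ x ∈ ψ '' Y :=
      hYimage ▸ Set.mem_image_of_mem ψ (Set.mem_univ x)
    exact ⟨y, hy, hS x y (by rw [hxy, dist_self]; exact zero_le_one)⟩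
  · exact exists_free_globallyControlled_atlas_of_injective hinv hproper hYinj.injective
      (hue.domRestrict Y) hR'

theorem stmt15 (X : Type) [MetricSpace X] [Countable X]
    (hud : UniformlyDiscrete X)
    (G : Type) [Group G] [Countable G] [MetricSpace G]
    (hinv : ∀ g x y : G, dist (g * x) (g * y) = dist x y)
    (hproper : ∀ (x : G) (r : ℝ), (closedBall x r).Finite)
    (ψ : X → G) (hue : IsUniformEmbeddingMap ψ) :
    ∃ R > (0:ℝ), ∃ Y : Set X,
      (∀ x : X, ∃ y ∈ Y, dist x y ≤ R) ∧
      ∀ R' > (0:ℝ), ∃ T Sig : Set (Set (↥Y × ↥Y)),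
        IsAtlasAt R' 1 T Sig ∧ IsGloballyControlledAt Sig :=
  stmt15_general X G hinv hproper ψ hue
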